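/- Let r, s ∈ (1, ∞) be real numbers and let D : 𝒜 → 𝒜 be a mapping such that D(sa) = sD(a) for all a ∈ 𝒜. Suppose there exists a function φ : 𝒜 × 𝒜 × 𝒜 → [0, ∞) such that lim_{n→∞} s^{−n} φ(s^n a, s^n b, s^n c) = 0 for all a, b, c ∈ 𝒜, and ‖r μ D((a+b)/r) + r μ D((a−b)/r) − 2 D(μ a) + D(c c* c) − D(c) c* c − c (D(c))* c − c c* D(c)‖ ≤ φ(a, b, c) for all μ ∈ 𝕋 and all a, b, c ∈ 𝒜. Then D is a J*-derivation on 𝒜. -/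

import Mathlib

open ContinuousLinearMap Filter

variable {H K : Type*} [NormedAddCommGroup H] [InnerProductSpace ℂ H] [CompleteSpace H]
  [NormedAddCommGroup K] [InnerProductSpace ℂ K] [CompleteSpace K]

/-- `𝒜` is closed under the `J*`-triple product `x ↦ x x* x`. -/
def JStarClosed (𝒜 : Submodule ℂ (H →L[ℂ] K)) : Prop :=
  ∀ x : H →L[ℂ] K, x ∈ 𝒜 → (x ∘L adjoint x) ∘L x ∈ 𝒜

/-- The triple product `c c* c` as an element of `𝒜`. -/
noncomputable def cube (𝒜 : Submodule ℂ (H →L[ℂ] K)) (hA : JStarClosed 𝒜) (c : 𝒜) : 𝒜 :=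
  ⟨((c : H →L[ℂ] K) ∘L adjoint (c : H →L[ℂ] K)) ∘L (c : H →L[ℂ] K), hA c c.2⟩

/-- `D : 𝒜 → 𝒜` is a `J*`-derivation: it is `ℂ`-linear and satisfies
`D(c c* c) = D(c) c* c + c (D(c))* c + c c* D(c)`. -/
noncomputable def IsJStarDerivation (𝒜 : Submodule ℂ (H →L[ℂ] K)) (hA : JStarClosed 𝒜)
    (D : 𝒜 → 𝒜) : Prop :=
  (∀ a b : 𝒜, D (a + b) = D a + D b) ∧
  (∀ (z : ℂ) (a : 𝒜), D (z • a) = z • D a) ∧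
  (∀ c : 𝒜, (D (cube 𝒜 hA c) : H →L[ℂ] K) =
      ((D c : H →L[ℂ] K) ∘L adjoint (c : H →L[ℂ] K)) ∘L (c : H →L[ℂ] K) +
      ((c : H →L[ℂ] K) ∘L adjoint (D c : H →L[ℂ] K)) ∘L (c : H →L[ℂ] K) +
      ((c : H →L[ℂ] K) ∘L adjoint (c : H →L[ℂ] K)) ∘L (D c : H →L[ℂ] K))

/-- The defect of the generalized Jensen functional equation combined with the
`J*`-derivation identity, for a map `f : 𝒜 → 𝒜`, parameter `r` and scalar `μ`. -/
noncomputable def jensenDefect (𝒜 : Submodule ℂ (H →L[ℂ] K)) (hA : JStarClosed 𝒜)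
    (r : ℝ) (f : 𝒜 → 𝒜) (μ : ℂ) (a b c : 𝒜) : H →L[ℂ] K :=
  ((r : ℂ) * μ) • (f ((r : ℂ)⁻¹ • (a + b)) : H →L[ℂ] K) +
  ((r : ℂ) * μ) • (f ((r : ℂ)⁻¹ • (a - b)) : H →L[ℂ] K) -
  (2 : ℂ) • (f (μ • a) : H →L[ℂ] K) +
  (f (cube 𝒜 hA c) : H →L[ℂ] K) -
  ((f c : H →L[ℂ] K) ∘L adjoint (c : H →L[ℂ] K)) ∘L (c : H →L[ℂ] K) -
  ((c : H →L[ℂ] K) ∘L adjoint (f c : H →L[ℂ] K)) ∘L (c : H →L[ℂ] K) -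
  ((c : H →L[ℂ] K) ∘L adjoint (c : H →L[ℂ] K)) ∘L (f c : H →L[ℂ] K)

open Topology

/-!
The defect splits into a Jensen part in `(a, b)` and a `J*`-derivation part in `c`. Since `D`
commutes with multiplication by `sⁿ`, the Jensen part at `(sⁿa, sⁿb)` is `sⁿ` times the one at
`(a, b)`, and the derivation part at `sⁿc` is `s³ⁿ` times the one at `c`; dividing by `sⁿ` and
letting `n → ∞` shows that both parts vanish. An exact solution of the Jensen equation for all
unit `μ` is additive and commutes with unit scalars, hence is `ℂ`-linear: the scalars commuting
with an additive map form a subring of `ℂ`, and the unit circle generates `ℂ` as a ring.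
-/

theorem Complex.subring_eq_top_of_norm_eq_one_mem (S : Subring ℂ)
    (hS : ∀ μ : ℂ, ‖μ‖ = 1 → μ ∈ S) : S = ⊤ := by
  have unit_mem (θ : ℝ) : Complex.exp (θ * Complex.I) ∈ S :=
    hS _ (Complex.norm_exp_ofReal_mul_I θ)
  -- `t = e^{iθ} + e^{-iθ}` with `θ = arccos (t / 2)`
  have small_real_mem (t : ℝ) (ht : |t| ≤ 2) : (t : ℂ) ∈ S := by
    obtain ⟨ht₁, ht₂⟩ := abs_le.mp ht
    have hcos : 2 * Real.cos (Real.arccos (t / 2)) = t := by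
      rw [Real.cos_arccos (by linarith) (by linarith)]; ring
    have := S.add_mem (unit_mem (Real.arccos (t / 2))) (unit_mem (-Real.arccos (t / 2)))
    rwa [Complex.ofReal_neg, ← Complex.two_cos, ← Complex.ofReal_cos, ← Complex.ofReal_ofNat,
      ← Complex.ofReal_mul, hcos] at this
  have real_mem (t : ℝ) : (t : ℂ) ∈ S := by
    have hfract : |Int.fract t| ≤ 2 := by
      rw [abs_of_nonneg (Int.fract_nonneg t)]; linarith [Int.fract_lt_one t]
    rw [← Int.floor_add_fract t, Complex.ofReal_add, Complex.ofReal_intCast]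
    exact S.add_mem (intCast_mem S _) (small_real_mem _ hfract)
  refine eq_top_iff.mpr fun z _ => ?_
  rw [← Complex.re_add_im z]
  exact S.add_mem (real_mem _) (S.mul_mem (real_mem _) (hS _ Complex.norm_I))

theorem map_pow_smul_of_map_smul {R M N : Type*} [Monoid R] [MulAction R M] [MulAction R N]
    {f : M → N} {c : R} (hf : ∀ x, f (c • x) = c • f x) (n : ℕ) (x : M) :
    f (c ^ n • x) = c ^ n • f x := by
  induction n with
  | zero => simp only [pow_zero, one_smul]
  | succ n ih => rw [pow_succ', mul_smul, mul_smul, hf, ih]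

theorem map_zero_of_map_smul {𝕜 M N : Type*} [Field 𝕜] [AddCommGroup M] [Module 𝕜 M]
    [AddCommGroup N] [Module 𝕜 N] {f : M → N} {c : 𝕜} (hc : c ≠ 1)
    (hf : f (c • 0) = c • f 0) : f 0 = 0 := by
  rw [smul_zero] at hf
  have : (c - 1) • f 0 = 0 := by rw [sub_smul, one_smul, ← hf, sub_self]
  exact (smul_eq_zero.mp this).resolve_left (sub_ne_zero.mpr hc)

theorem eq_zero_of_pow_mul_norm_le {E : Type*} [NormedAddCommGroup E] {x : E} {s : ℝ}
    (hs : 0 < s) {u : ℕ → ℝ} (hu : Tendsto (fun n => (s ^ n)⁻¹ * u n) atTop (𝓝 0))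
    (hx : ∀ n, s ^ n * ‖x‖ ≤ u n) : x = 0 :=
  norm_le_zero_iff.mp <| ge_of_tendsto' hu fun n => (le_inv_mul_iff₀ (pow_pos hs n)).mpr (hx n)

section JensenEquation

variable {E F : Type*} [AddCommGroup E] [Module ℂ E] [AddCommGroup F] [Module ℂ F]

theorem AddMonoidHom.map_smul_of_norm_eq_one (f : E →+ F)
    (hf : ∀ μ : ℂ, ‖μ‖ = 1 → ∀ a, f (μ • a) = μ • f a) (z : ℂ) (a : E) :
    f (z • a) = z • f a := by
  let S : Subring ℂ :=
    { carrier := {z | ∀ a, f (z • a) = z • f a}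
      mul_mem' := fun {z w} hz hw a => by rw [mul_smul, hz (w • a), hw a, mul_smul]
      one_mem' := fun a => by rw [one_smul, one_smul]
      add_mem' := fun hz hw a => by rw [add_smul, map_add, hz a, hw a, add_smul]
      zero_mem' := fun a => by rw [zero_smul, zero_smul, map_zero]
      neg_mem' := fun hz a => by rw [neg_smul, map_neg, hz a, neg_smul] }
  have hz : z ∈ S := (Complex.subring_eq_top_of_norm_eq_one_mem S hf).symm ▸ Subring.mem_top z
  exact hz a

noncomputable def jensenGap (r : ℂ) (f : E → F) (μ : ℂ) (a b : E) : F :=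
  (r * μ) • f (r⁻¹ • (a + b)) + (r * μ) • f (r⁻¹ • (a - b)) - (2 : ℂ) • f (μ • a)

theorem jensenGap_smul {f : E → F} {t : ℂ} (hf : ∀ x, f (t • x) = t • f x) (r μ : ℂ) (a b : E) :
    jensenGap r f μ (t • a) (t • b) = t • jensenGap r f μ a b := by
  simp only [jensenGap, ← smul_add, ← smul_sub, smul_comm _ t, hf]

def IsJensenSolution (r : ℂ) (f : E → F) : Prop :=
  ∀ μ : ℂ, ‖μ‖ = 1 → ∀ a b : E, jensenGap r f μ a b = 0

namespace IsJensenSolution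

variable {r : ℂ} {f : E → F}

theorem eq (hf : IsJensenSolution r f) {μ : ℂ} (hμ : ‖μ‖ = 1) (a b : E) :
    (r * μ) • f (r⁻¹ • (a + b)) + (r * μ) • f (r⁻¹ • (a - b)) = (2 : ℂ) • f (μ • a) :=
  sub_eq_zero.mp (hf μ hμ a b)

theorem smul_map_inv_smul (hf : IsJensenSolution r f) (a : E) : r • f (r⁻¹ • a) = f a := by
  have h := hf.eq (μ := 1) (by simp) a 0
  rw [add_zero, sub_zero, mul_one, one_smul, ← two_smul ℂ] at h
  exact smul_right_injective F two_ne_zero h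

theorem map_smul_of_norm_eq_one (hf : IsJensenSolution r f) {μ : ℂ} (hμ : ‖μ‖ = 1) (a : E) :
    f (μ • a) = μ • f a := by
  have h := hf.eq hμ a 0
  rw [add_zero, sub_zero, ← two_smul ℂ] at h
  rw [← smul_right_injective F two_ne_zero h, mul_comm, mul_smul, hf.smul_map_inv_smul]

theorem map_add_add_map_sub (hf : IsJensenSolution r f) (a b : E) :
    f (a + b) + f (a - b) = (2 : ℂ) • f a := by
  simpa only [mul_one, one_smul, hf.smul_map_inv_smul] using hf.eq (μ := 1) (by simp) a b

theorem map_zero (hf : IsJensenSolution r f) : f 0 = 0 := by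
  have h := hf.map_smul_of_norm_eq_one (μ := -1) (by simp) 0
  rw [smul_zero, neg_one_smul, eq_neg_iff_add_eq_zero, ← two_smul ℂ] at h
  exact (smul_eq_zero.mp h).resolve_left two_ne_zero

theorem map_add (hf : IsJensenSolution r f) (a b : E) : f (a + b) = f a + f b := by
  have map_two_smul (x : E) : f ((2 : ℂ) • x) = (2 : ℂ) • f x := by
    simpa only [sub_self, hf.map_zero, add_zero, two_smul] using hf.map_add_add_map_sub x x
  have h := hf.map_add_add_map_sub ((2⁻¹ : ℂ) • (a + b)) ((2⁻¹ : ℂ) • (a - b))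
  rwa [← map_two_smul, smul_smul, mul_inv_cancel₀ two_ne_zero, one_smul,
    show (2⁻¹ : ℂ) • (a + b) + (2⁻¹ : ℂ) • (a - b) = a by module,
    show (2⁻¹ : ℂ) • (a + b) - (2⁻¹ : ℂ) • (a - b) = b by module, eq_comm] at h

theorem map_smul (hf : IsJensenSolution r f) (z : ℂ) (a : E) : f (z • a) = z • f a :=
  (AddMonoidHom.mk' f hf.map_add).map_smul_of_norm_eq_one
    (fun _ hμ => hf.map_smul_of_norm_eq_one hμ) z a

end IsJensenSolution

end JensenEquation

section JStar

variable {𝒜 : Submodule ℂ (H →L[ℂ] K)} {hA : JStarClosed 𝒜}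

theorem cube_smul {t : ℂ} (ht : starRingEnd ℂ t = t) (c : 𝒜) :
    cube 𝒜 hA (t • c) = t ^ 3 • cube 𝒜 hA c := by
  ext1
  simp only [cube, Submodule.coe_smul, LinearIsometryEquiv.map_smulₛₗ, ht, smul_comp, comp_smul,
    smul_smul]
  ring_nf

noncomputable def derivationDefect (𝒜 : Submodule ℂ (H →L[ℂ] K)) (hA : JStarClosed 𝒜)
    (f : 𝒜 → 𝒜) (c : 𝒜) : H →L[ℂ] K :=
  (f (cube 𝒜 hA c) : H →L[ℂ] K) -
  ((f c : H →L[ℂ] K) ∘L adjoint (c : H →L[ℂ] K)) ∘L (c : H →L[ℂ] K) -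
  ((c : H →L[ℂ] K) ∘L adjoint (f c : H →L[ℂ] K)) ∘L (c : H →L[ℂ] K) -
  ((c : H →L[ℂ] K) ∘L adjoint (c : H →L[ℂ] K)) ∘L (f c : H →L[ℂ] K)

theorem jensenDefect_eq_add (r : ℝ) (f : 𝒜 → 𝒜) (μ : ℂ) (a b c : 𝒜) :
    jensenDefect 𝒜 hA r f μ a b c = ((jensenGap (r : ℂ) f μ a b : 𝒜) : H →L[ℂ] K) +
      derivationDefect 𝒜 hA f c := by
  simp only [jensenDefect, jensenGap, derivationDefect, Submodule.coe_sub, Submodule.coe_add,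
    Submodule.coe_smul]
  abel

theorem derivationDefect_zero {f : 𝒜 → 𝒜} (hf : f 0 = 0) : derivationDefect 𝒜 hA f 0 = 0 := by
  have hcube : cube 𝒜 hA 0 = 0 := by ext1; simp [cube]
  simp [derivationDefect, hcube, hf]

theorem derivationDefect_smul {f : 𝒜 → 𝒜} {t : ℂ} (ht : starRingEnd ℂ t = t)
    (hf : ∀ x, f (t • x) = t • f x) (c : 𝒜) :
    derivationDefect 𝒜 hA f (t • c) = t ^ 3 • derivationDefect 𝒜 hA f c := by
  simp only [derivationDefect, cube_smul ht, map_pow_smul_of_map_smul hf, hf, Submodule.coe_smul,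
    LinearIsometryEquiv.map_smulₛₗ, ht, smul_comp, comp_smul, smul_smul, smul_sub]
  ring_nf

end JStar

section Superstability

variable {𝒜 : Submodule ℂ (H →L[ℂ] K)} {hA : JStarClosed 𝒜} {r s : ℝ} {D : 𝒜 → 𝒜}
  {φ : 𝒜 → 𝒜 → 𝒜 → ℝ}

theorem isJensenSolution_of_norm_jensenDefect_le (hs : 0 < s)
    (hDs : ∀ a : 𝒜, D ((s : ℂ) • a) = (s : ℂ) • D a) (hD0 : D 0 = 0)
    (hlim : ∀ a b c : 𝒜, Tendsto
      (fun n : ℕ => (s ^ n)⁻¹ * φ (((s : ℂ) ^ n) • a) (((s : ℂ) ^ n) • b) (((s : ℂ) ^ n) • c))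
      atTop (𝓝 0))
    (hineq : ∀ (μ : ℂ), ‖μ‖ = 1 → ∀ a b c : 𝒜, ‖jensenDefect 𝒜 hA r D μ a b c‖ ≤ φ a b c) :
    IsJensenSolution (r : ℂ) D := by
  intro μ hμ a b
  refine eq_zero_of_pow_mul_norm_le hs (hlim a b 0) fun n => ?_
  have h := hineq μ hμ ((s : ℂ) ^ n • a) ((s : ℂ) ^ n • b) ((s : ℂ) ^ n • 0)
  rw [jensenDefect_eq_add, smul_zero, derivationDefect_zero hD0, add_zero,
    jensenGap_smul (map_pow_smul_of_map_smul hDs n), Submodule.coe_smul, norm_smul, norm_pow,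
    Complex.norm_of_nonneg hs.le, Submodule.norm_coe] at h
  rwa [smul_zero]

theorem derivationDefect_eq_zero_of_norm_jensenDefect_le (hs : 1 ≤ s)
    (hDs : ∀ a : 𝒜, D ((s : ℂ) • a) = (s : ℂ) • D a) (hD0 : D 0 = 0)
    (hlim : ∀ a b c : 𝒜, Tendsto
      (fun n : ℕ => (s ^ n)⁻¹ * φ (((s : ℂ) ^ n) • a) (((s : ℂ) ^ n) • b) (((s : ℂ) ^ n) • c))
      atTop (𝓝 0))
    (hineq : ∀ (μ : ℂ), ‖μ‖ = 1 → ∀ a b c : 𝒜, ‖jensenDefect 𝒜 hA r D μ a b c‖ ≤ φ a b c)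
    (c : 𝒜) : derivationDefect 𝒜 hA D c = 0 := by
  refine eq_zero_of_pow_mul_norm_le (by linarith) (hlim 0 0 c) fun n => ?_
  have hgap : jensenGap (r : ℂ) D 1 0 0 = 0 := by simp [jensenGap, hD0]
  have hconj : starRingEnd ℂ ((s : ℂ) ^ n) = (s : ℂ) ^ n := by simp
  have h := hineq 1 norm_one ((s : ℂ) ^ n • 0) ((s : ℂ) ^ n • 0) ((s : ℂ) ^ n • c)
  rw [jensenDefect_eq_add, smul_zero, hgap, Submodule.coe_zero, zero_add,
    derivationDefect_smul hconj (map_pow_smul_of_map_smul hDs n), norm_smul, norm_pow, norm_pow,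
    Complex.norm_of_nonneg (by linarith)] at h
  calc s ^ n * ‖derivationDefect 𝒜 hA D c‖
      ≤ (s ^ n) ^ 3 * ‖derivationDefect 𝒜 hA D c‖ := by
        gcongr
        exact le_self_pow₀ (one_le_pow₀ hs) three_ne_zero
    _ ≤ φ (((s : ℂ) ^ n) • 0) (((s : ℂ) ^ n) • 0) (((s : ℂ) ^ n) • c) := by rwa [smul_zero]

end Superstability

theorem superstability_JStarDerivation
    (𝒜 : Submodule ℂ (H →L[ℂ] K))
    (hA : JStarClosed 𝒜)
    (r s : ℝ) (hs : 1 < s)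
    (D : 𝒜 → 𝒜) (hDs : ∀ a : 𝒜, D ((s : ℂ) • a) = (s : ℂ) • D a)
    (φ : 𝒜 → 𝒜 → 𝒜 → ℝ)
    (hlim : ∀ a b c : 𝒜, Tendsto
      (fun n : ℕ => (s ^ n)⁻¹ * φ (((s : ℂ) ^ n) • a) (((s : ℂ) ^ n) • b) (((s : ℂ) ^ n) • c))
      atTop (nhds 0))
    (hineq : ∀ (μ : ℂ), ‖μ‖ = 1 → ∀ a b c : 𝒜, ‖jensenDefect 𝒜 hA r D μ a b c‖ ≤ φ a b c) :
    IsJStarDerivation 𝒜 hA D := by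
  have hD0 : D 0 = 0 := map_zero_of_map_smul (by exact_mod_cast hs.ne') (hDs 0)
  have hJensen := isJensenSolution_of_norm_jensenDefect_le (by linarith) hDs hD0 hlim hineq
  refine ⟨hJensen.map_add, hJensen.map_smul, fun c => ?_⟩
  have h := derivationDefect_eq_zero_of_norm_jensenDefect_le hs.le hDs hD0 hlim hineq c
  rwa [derivationDefect, sub_sub, sub_sub, sub_eq_zero, ← add_assoc] at h
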